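/- arXiv:1509.01360 — 3 statements merged into one kernel-verified Lean document; each statement's English description precedes it below -/
import Mathlib

section
/- For h(x) = Σ_{j=1}^J c_j |x - b_j| with c_j > 0, b_1 < ... < b_J, and λ > 0, if v lies in the interval [b_n - λ(Σ_{j=n}^J c_j - Σ_{j=1}^{n-1} c_j), b_n - λ(Σ_{j=n+1}^J c_j - Σ_{j=1}^{n} c_j)) for some 1 ≤ n ≤ J, then prox_{λh}(v) = b_n. -/
/-- if v ∈ [b_n - λ(Σ_{j≥n}c_j - Σ_{j<n}c_j), b_n - λ(Σ_{j>n}c_j - Σ_{j≤n}c_j))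
(0-indexed n), then prox_{λh}(v) = b_n. -/
theorem stmt3 (J : ℕ) (c b : Fin J → ℝ) (hc : ∀ j, 0 < c j) (hb : StrictMono b)
    (lam v : ℝ) (hlam : 0 < lam) (n : Fin J)
    (hv1 : b n - lam * ((∑ j ∈ Finset.univ.filter (fun j : Fin J => (n : ℕ) ≤ (j : ℕ)), c j)
            - ∑ j ∈ Finset.univ.filter (fun j : Fin J => (j : ℕ) < (n : ℕ)), c j) ≤ v)
    (hv2 : v < b n - lam * ((∑ j ∈ Finset.univ.filter (fun j : Fin J => (n : ℕ) < (j : ℕ)), c j)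
            - ∑ j ∈ Finset.univ.filter (fun j : Fin J => (j : ℕ) ≤ (n : ℕ)), c j))
    (p : ℝ)
    (hp : ∀ x : ℝ, (∑ j, c j * |p - b j|) + (1 / (2 * lam)) * (p - v) ^ 2
        ≤ (∑ j, c j * |x - b j|) + (1 / (2 * lam)) * (x - v) ^ 2) :
    p = b n := by
  classical
  set S1 := Finset.univ.filter (fun j : Fin J => (j : ℕ) < (n : ℕ)) with hS1
  set S3 := Finset.univ.filter (fun j : Fin J => (n : ℕ) < (j : ℕ)) with hS3
  have hnS3 : n ∉ S3 := by simp [hS3]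
  have hnS1 : n ∉ S1 := by simp [hS1]
  set A := ∑ j ∈ S1, c j with hA
  set B := ∑ j ∈ S3, c j with hB
  -- split of the full sum
  have hsplit : ∀ f : Fin J → ℝ, ∑ j, f j = (∑ j ∈ S1, f j) + (f n + ∑ j ∈ S3, f j) := by
    intro f
    have h1 := Finset.sum_filter_add_sum_filter_not Finset.univ
      (fun j : Fin J => (j : ℕ) < (n : ℕ)) f
    have h2 : Finset.univ.filter (fun j : Fin J => ¬ ((j : ℕ) < (n : ℕ))) = insert n S3 := by
      ext j
      simp only [Finset.mem_filter, Finset.mem_univ, true_and, Finset.mem_insert, hS3,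
        Fin.ext_iff]
      omega
    rw [h2, Finset.sum_insert hnS3] at h1
    linarith [h1]
  -- translate hv1 / hv2
  have e1 : Finset.univ.filter (fun j : Fin J => (n : ℕ) ≤ (j : ℕ)) = insert n S3 := by
    ext j
    simp only [Finset.mem_filter, Finset.mem_univ, true_and, Finset.mem_insert, hS3, Fin.ext_iff]
    omega
  have e2 : Finset.univ.filter (fun j : Fin J => (j : ℕ) ≤ (n : ℕ)) = insert n S1 := by
    ext j
    simp only [Finset.mem_filter, Finset.mem_univ, true_and, Finset.mem_insert, hS1, Fin.ext_iff]
    omega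
  rw [e1, Finset.sum_insert hnS3] at hv1
  rw [e2, Finset.sum_insert hnS1] at hv2
  simp only [← hA, ← hB] at hv1 hv2
  -- key sum inequality
  have key : ∑ j, c j * |b n - b j| + ((A - B) * (p - b n) + c n * |p - b n|)
      ≤ ∑ j, c j * |p - b j| := by
    rw [hsplit (fun j => c j * |b n - b j|), hsplit (fun j => c j * |p - b j|)]
    have h1 : ∑ j ∈ S1, (c j * |b n - b j| + c j * (p - b n)) ≤ ∑ j ∈ S1, c j * |p - b j| := by
      apply Finset.sum_le_sum
      intro j hj
      have hjn : b j < b n := hb (by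
        have := (Finset.mem_filter.mp hj).2
        exact Fin.lt_def.mpr this)
      have habs : |b n - b j| = b n - b j := abs_of_pos (by linarith)
      have h2 : p - b j ≤ |p - b j| := le_abs_self _
      nlinarith [(hc j).le]
    have h3 : ∑ j ∈ S3, (c j * |b n - b j| - c j * (p - b n)) ≤ ∑ j ∈ S3, c j * |p - b j| := by
      apply Finset.sum_le_sum
      intro j hj
      have hjn : b n < b j := hb (by
        have := (Finset.mem_filter.mp hj).2
        exact Fin.lt_def.mpr this)
      have habs : |b n - b j| = -(b n - b j) := abs_of_neg (by linarith)
      have h2 : -(p - b j) ≤ |p - b j| := neg_le_abs _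
      nlinarith [(hc j).le]
    rw [Finset.sum_add_distrib, ← Finset.sum_mul] at h1
    rw [Finset.sum_sub_distrib, ← Finset.sum_mul] at h3
    have hbn : |b n - b n| = 0 := by simp
    have hcn : c n * |b n - b n| = 0 := by rw [hbn]; ring
    rw [hcn]
    have : c n * |p - b n| ≤ c n * |p - b n| := le_refl _
    linarith [h1, h3]
  have hpb := hp (b n)
  set t := p - b n with ht
  clear_value t
  have hmain : (A - B) * t + c n * |t| + (1 / (2 * lam)) * (p - v) ^ 2
      ≤ (1 / (2 * lam)) * (b n - v) ^ 2 := by linarith [key, hpb]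
  have hq : (p - v) ^ 2 = t ^ 2 + 2 * (b n - v) * t + (b n - v) ^ 2 := by
    rw [ht]; ring
  rw [hq] at hmain
  clear_value A B
  have hlamne : (2 : ℝ) * lam ≠ 0 := by positivity
  have e : 2 * lam * ((A - B) * t + c n * |t|
        + 1 / (2 * lam) * (t ^ 2 + 2 * (b n - v) * t + (b n - v) ^ 2))
      = 2 * lam * ((A - B) * t) + 2 * lam * (c n * |t|)
        + t ^ 2 + 2 * (b n - v) * t + (b n - v) ^ 2 := by
    field_simp
    ring
  have e2 : 2 * lam * (1 / (2 * lam) * (b n - v) ^ 2) = (b n - v) ^ 2 := by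
    field_simp
  have h := mul_le_mul_of_nonneg_left hmain (by linarith : (0:ℝ) ≤ 2 * lam)
  have hmain2 : 2 * lam * ((A - B) * t) + 2 * lam * (c n * |t|)
      + t ^ 2 + 2 * (b n - v) * t ≤ 0 := by linarith [h, e, e2]
  have ht0 : t = 0 := by
    rcases abs_cases t with ⟨he, hpos⟩ | ⟨he, hneg⟩
    · rw [he] at hmain2
      have hprod : 0 ≤ ((b n - v) - lam * (B - (c n + A))) * t :=
        mul_nonneg (by linarith) hpos
      have hsq : t ^ 2 ≤ 0 := by nlinarith [hmain2, hprod]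
      exact pow_eq_zero_iff two_ne_zero |>.mp (le_antisymm hsq (sq_nonneg t))
    · rw [he] at hmain2
      have hprod : 0 ≤ (lam * (c n + B - A) - (b n - v)) * (-t) :=
        mul_nonneg (by linarith) (by linarith)
      have hsq : t ^ 2 ≤ 0 := by nlinarith [hmain2, hprod]
      exact pow_eq_zero_iff two_ne_zero |>.mp (le_antisymm hsq (sq_nonneg t))
  rw [ht] at ht0
  linarith [ht0]
end

section
/- For h(x) = Σ_{j=1}^J c_j |x - b_j| with c_j > 0, b_1 < ... < b_J, and λ > 0, if v lies in [b_n - λ(Σ_{j=n+1}^J c_j - Σ_{j=1}^{n} c_j), b_{n+1} - λ(Σ_{j=n+1}^J c_j - Σ_{j=1}^{n} c_j)) for some 1 ≤ n ≤ J-1, then prox_{λh}(v) = v + λ(Σ_{j=n+1}^J c_j - Σ_{j=1}^{n} c_j). -/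
/-- if v ∈ [b_n - λS, b_{n+1} - λS) where S = Σ_{j>n}c_j - Σ_{j≤n}c_j
(0-indexed n, with n+1 < J), then prox_{λh}(v) = v + λS. -/
theorem stmt4 (J : ℕ) (c b : Fin J → ℝ) (hc : ∀ j, 0 < c j) (hb : StrictMono b)
    (lam v : ℝ) (hlam : 0 < lam) (n : ℕ) (hn : n + 1 < J)
    (hv1 : b ⟨n, Nat.lt_of_succ_lt hn⟩
          - lam * ((∑ j ∈ Finset.univ.filter (fun j : Fin J => n < (j : ℕ)), c j)
            - ∑ j ∈ Finset.univ.filter (fun j : Fin J => (j : ℕ) ≤ n), c j) ≤ v)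
    (hv2 : v < b ⟨n + 1, hn⟩
          - lam * ((∑ j ∈ Finset.univ.filter (fun j : Fin J => n < (j : ℕ)), c j)
            - ∑ j ∈ Finset.univ.filter (fun j : Fin J => (j : ℕ) ≤ n), c j))
    (p : ℝ)
    (hp : ∀ x : ℝ, (∑ j, c j * |p - b j|) + (1 / (2 * lam)) * (p - v) ^ 2
        ≤ (∑ j, c j * |x - b j|) + (1 / (2 * lam)) * (x - v) ^ 2) :
    p = v + lam * ((∑ j ∈ Finset.univ.filter (fun j : Fin J => n < (j : ℕ)), c j)
            - ∑ j ∈ Finset.univ.filter (fun j : Fin J => (j : ℕ) ≤ n), c j) := by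
  set F1 := Finset.univ.filter (fun j : Fin J => (j : ℕ) ≤ n) with hF1
  set F2 := Finset.univ.filter (fun j : Fin J => n < (j : ℕ)) with hF2
  set A := ∑ j ∈ F1, c j with hA
  set B := ∑ j ∈ F2, c j with hB
  set q := v + lam * (B - A) with hq
  clear_value A B q
  have hbnq : b ⟨n, Nat.lt_of_succ_lt hn⟩ ≤ q := by rw [hq]; linarith
  have hqbn1 : q < b ⟨n + 1, hn⟩ := by rw [hq]; linarith
  -- split of sums
  have hsplit : ∀ g : Fin J → ℝ, ∑ j, g j = (∑ j ∈ F1, g j) + ∑ j ∈ F2, g j := by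
    intro g
    rw [hF1, hF2]
    rw [← Finset.sum_filter_add_sum_filter_not Finset.univ (fun j : Fin J => (j : ℕ) ≤ n) g]
    congr 1
    apply Finset.sum_congr _ (fun _ _ => rfl)
    apply Finset.filter_congr
    intro j _
    simp [not_le]
  have hmem1 : ∀ j ∈ F1, b j ≤ q := by
    intro j hj
    rw [hF1, Finset.mem_filter] at hj
    have : b j ≤ b ⟨n, Nat.lt_of_succ_lt hn⟩ := hb.monotone (by exact hj.2)
    linarith
  have hmem2 : ∀ j ∈ F2, q ≤ b j := by
    intro j hj
    rw [hF2, Finset.mem_filter] at hj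
    have : b ⟨n + 1, hn⟩ ≤ b j := hb.monotone (by exact hj.2)
    linarith
  have key : ∀ x : ℝ, (∑ j, c j * |q - b j|) + (1 / (2 * lam)) * (q - v) ^ 2
      + (1 / (2 * lam)) * (x - q) ^ 2
      ≤ (∑ j, c j * |x - b j|) + (1 / (2 * lam)) * (x - v) ^ 2 := by
    intro x
    rw [hsplit (fun j => c j * |q - b j|), hsplit (fun j => c j * |x - b j|)]
    have h1 : ∑ j ∈ F1, c j * |q - b j| = ∑ j ∈ F1, c j * (q - b j) :=
      Finset.sum_congr rfl fun j hj => by rw [abs_of_nonneg (by linarith [hmem1 j hj])]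
    have h2 : ∑ j ∈ F2, c j * |q - b j| = ∑ j ∈ F2, c j * (b j - q) :=
      Finset.sum_congr rfl fun j hj => by
        rw [abs_of_nonpos (by linarith [hmem2 j hj])]; ring
    have h3 : ∑ j ∈ F1, c j * (x - b j) ≤ ∑ j ∈ F1, c j * |x - b j| :=
      Finset.sum_le_sum fun j _ => mul_le_mul_of_nonneg_left (le_abs_self _) (hc j).le
    have h4 : ∑ j ∈ F2, c j * (b j - x) ≤ ∑ j ∈ F2, c j * |x - b j| :=
      Finset.sum_le_sum fun j _ => mul_le_mul_of_nonneg_left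
        (by rw [abs_sub_comm]; exact le_abs_self _) (hc j).le
    have h5 : ∑ j ∈ F1, c j * (x - b j) = (∑ j ∈ F1, c j * (q - b j)) + A * (x - q) := by
      rw [hA, Finset.sum_mul, ← Finset.sum_add_distrib]
      exact Finset.sum_congr rfl fun j _ => by ring
    have h6 : ∑ j ∈ F2, c j * (b j - x) = (∑ j ∈ F2, c j * (b j - q)) - B * (x - q) := by
      rw [hB, Finset.sum_mul, ← Finset.sum_sub_distrib]
      exact Finset.sum_congr rfl fun j _ => by ring
    have hquad : (1 / (2 * lam)) * (x - v) ^ 2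
        = (1 / (2 * lam)) * (q - v) ^ 2 + (B - A) * (x - q)
          + (1 / (2 * lam)) * (x - q) ^ 2 := by
      rw [hq]
      have hl : lam ≠ 0 := ne_of_gt hlam
      field_simp
      ring
    have hcancel : A * (x - q) - B * (x - q) + (B - A) * (x - q) = 0 := by ring
    linarith
  have h1 := hp q
  have h2 := key p
  have h3 : (1 / (2 * lam)) * (p - q) ^ 2 ≤ 0 := by linarith
  have h4 : (0:ℝ) < 1 / (2 * lam) := by positivity
  have h6 : 0 ≤ 1 / (2 * lam) * (p - q) ^ 2 := by positivity
  have h7 : 1 / (2 * lam) * (p - q) ^ 2 = 0 := le_antisymm h3 h6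
  have h8 : (p - q) ^ 2 = 0 := by
    rcases mul_eq_zero.mp h7 with h | h
    · exact absurd h (ne_of_gt h4)
    · exact h
  have : p - q = 0 := by
    have := pow_eq_zero_iff (n := 2) (by norm_num) |>.mp h8
    exact this
  rw [hq] at this ⊢
  linarith
end

section
/- Let A be an N×N left-stochastic matrix (columns sum to 1, nonnegative entries), 𝒜 = A ⊗ I_M, and D a block diagonal matrix D = diag{D_1,...,D_N} with symmetric blocks D_k satisfying ‖D_k‖₂ ≤ ρ < 1 for all k. Then the block maximum norm of B = 𝒜ᵀ D satisfies ‖B‖_{b,∞} ≤ ρ < 1. -/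
/-- for A left-stochastic and D block diagonal with symmetric blocks of
spectral norm at most ρ < 1, the matrix B = (A ⊗ I_M)ᵀ D satisfies ‖B‖_{b,∞} ≤ ρ < 1,
i.e. ‖Bx‖_{b,∞} ≤ ρ ‖x‖_{b,∞} for every block vector x. -/
theorem stmt17 (N M : ℕ) (A : Matrix (Fin N) (Fin N) ℝ)
    (hA1 : ∀ i j, 0 ≤ A i j) (hA2 : ∀ j, ∑ i, A i j = 1)
    (D : Fin N → Matrix (Fin M) (Fin M) ℝ) (hDsymm : ∀ k, (D k).IsSymm)
    (ρ : ℝ) (hρ : ρ < 1)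
    (hD : ∀ k (v : Fin M → ℝ),
        Real.sqrt (∑ i, ((D k).mulVec v i) ^ 2) ≤ ρ * Real.sqrt (∑ i, (v i) ^ 2)) :
    ∀ x : Fin N → Fin M → ℝ,
      (⨆ k, Real.sqrt (∑ i, ((∑ ℓ, A ℓ k • (D ℓ).mulVec (x ℓ)) i) ^ 2))
        ≤ ρ * ⨆ k, Real.sqrt (∑ i, (x k i) ^ 2) := by
  intro x
  rcases Nat.eq_zero_or_pos N with hN | hN
  · subst hN
    simp [Real.iSup_of_isEmpty]
  rcases Nat.eq_zero_or_pos M with hM | hM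
  · subst hM
    simp [ciSup_const]
  haveI : Nonempty (Fin N) := ⟨⟨0, hN⟩⟩
  -- ρ is nonnegative
  have hsqrtM : (0:ℝ) < Real.sqrt (∑ _i : Fin M, (1:ℝ) ^ 2) := by
    apply Real.sqrt_pos.mpr
    simp
    positivity
  have hρ0 : 0 ≤ ρ := by
    have h := hD ⟨0, hN⟩ (fun _ => 1)
    have h0 := Real.sqrt_nonneg (∑ i, (((D ⟨0, hN⟩).mulVec fun _ => 1) i) ^ 2)
    nlinarith
  set e : (Fin M → ℝ) ≃ₗ[ℝ] EuclideanSpace ℝ (Fin M) :=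
    (WithLp.linearEquiv 2 ℝ (Fin M → ℝ)).symm with he
  have hn_eq : ∀ v : Fin M → ℝ, Real.sqrt (∑ i, (v i) ^ 2) = ‖e v‖ := by
    intro v
    rw [EuclideanSpace.norm_eq]
    simp [he, Real.norm_eq_abs, sq_abs, WithLp.linearEquiv]
  set S := ⨆ k, Real.sqrt (∑ i, (x k i) ^ 2) with hS
  have hbdd : BddAbove (Set.range fun k => Real.sqrt (∑ i, (x k i) ^ 2)) :=
    Finite.bddAbove_range _
  have hxS : ∀ k, Real.sqrt (∑ i, (x k i) ^ 2) ≤ S := fun k => le_ciSup hbdd k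
  have hS0 : 0 ≤ S := le_trans (Real.sqrt_nonneg _) (hxS ⟨0, hN⟩)
  apply ciSup_le
  intro k
  rw [hn_eq]
  have hsum : e (∑ ℓ, A ℓ k • (D ℓ).mulVec (x ℓ))
      = ∑ ℓ, A ℓ k • e ((D ℓ).mulVec (x ℓ)) := by
    rw [map_sum]
    simp
  rw [hsum]
  calc ‖∑ ℓ, A ℓ k • e ((D ℓ).mulVec (x ℓ))‖
      ≤ ∑ ℓ, ‖A ℓ k • e ((D ℓ).mulVec (x ℓ))‖ := norm_sum_le _ _
    _ = ∑ ℓ, A ℓ k * ‖e ((D ℓ).mulVec (x ℓ))‖ := by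
        refine Finset.sum_congr rfl fun ℓ _ => ?_
        rw [norm_smul, Real.norm_eq_abs, abs_of_nonneg (hA1 ℓ k)]
    _ ≤ ∑ ℓ, A ℓ k * (ρ * S) := by
        refine Finset.sum_le_sum fun ℓ _ => ?_
        apply mul_le_mul_of_nonneg_left _ (hA1 ℓ k)
        rw [← hn_eq]
        calc Real.sqrt (∑ i, ((D ℓ).mulVec (x ℓ) i) ^ 2)
            ≤ ρ * Real.sqrt (∑ i, (x ℓ i) ^ 2) := hD ℓ (x ℓ)
          _ ≤ ρ * S := mul_le_mul_of_nonneg_left (hxS ℓ) hρ0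
    _ = ρ * S := by rw [← Finset.sum_mul, hA2 k, one_mul]
end
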